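/- Let λ be a point of the Boyer–Lindquist phase-space chart U with r = r_s/2, p_t + (c/r_s)·p_φ = 0 and (p_θ, p_φ) ≠ (0,0) (i.e. λ ∈ Σ₂ \ N*ℋ), and let β : U → ℝ be any smooth function with β(λ) ≠ 0. Define f^± := p_t + Ψ ± (r − r_s/2)·β. Then the three vectors of ℝ⁸ given by the Hamiltonian vector fields H_{f⁺}(λ) and H_{f⁻}(λ), with components (∂f/∂p_t, ∂f/∂p_r, ∂f/∂p_θ, ∂f/∂p_φ, −∂f/∂t, −∂f/∂r, −∂f/∂θ, −∂f/∂φ), together with the cone-axis (radial) vector R(λ) := (0,0,0,0, p_t, p_r, p_θ, p_φ), are linearly independent. -/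

import Mathlib

noncomputable section

/-- Partial derivative of a function on phase space ℝ⁸ with respect to the i-th variable.
Coordinates: x 0 = t, x 1 = r, x 2 = θ, x 3 = φ, x 4 = p_t, x 5 = p_r, x 6 = p_θ, x 7 = p_φ. -/
def pd (i : Fin 8) (f : (Fin 8 → ℝ) → ℝ) (x : Fin 8 → ℝ) : ℝ :=
  deriv (fun s => f (Function.update x i s)) (x i)

/-- The Hamiltonian vector field of f, with components
(∂f/∂p_t, ∂f/∂p_r, ∂f/∂p_θ, ∂f/∂p_φ, −∂f/∂t, −∂f/∂r, −∂f/∂θ, −∂f/∂φ). -/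
def hamVF (f : (Fin 8 → ℝ) → ℝ) (x : Fin 8 → ℝ) : Fin 8 → ℝ :=
  ![pd 4 f x, pd 5 f x, pd 6 f x, pd 7 f x,
    -pd 0 f x, -pd 1 f x, -pd 2 f x, -pd 3 f x]

/-- Σ = r² + (r_s²/4)·cos²θ -/
def Sig (rs r th : ℝ) : ℝ := r ^ 2 + rs ^ 2 / 4 * Real.cos th ^ 2

/-- D = r² + r_s²/4 + (r_s·r/Σ)·(r_s²/4)·sin²θ -/
def Dfun (rs r th : ℝ) : ℝ :=
  r ^ 2 + rs ^ 2 / 4 + rs * r / Sig rs r th * (rs ^ 2 / 4) * Real.sin th ^ 2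

/-- Ψ = ((r_s·c/2)·(r_s·r/Σ)/D)·p_φ as a function on phase space. -/
def Psiv (rs c : ℝ) (x : Fin 8 → ℝ) : ℝ :=
  rs * c / 2 * (rs * x 1 / Sig rs (x 1) (x 2)) / Dfun rs (x 1) (x 2) * x 7

/-- The Boyer–Lindquist phase-space chart U = {r > 0, sin θ ≠ 0}. -/
def chartU : Set (Fin 8 → ℝ) := {x | 0 < x 1 ∧ Real.sin (x 2) ≠ 0}

lemma isOpen_chartU : IsOpen chartU := by
  have h1 : IsOpen {x : Fin 8 → ℝ | 0 < x 1} :=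
    isOpen_Ioi.preimage (continuous_apply 1)
  have h2 : IsOpen {x : Fin 8 → ℝ | Real.sin (x 2) ≠ 0} :=
    isOpen_compl_singleton.preimage (Real.continuous_sin.comp (continuous_apply 2))
  exact h1.inter h2

lemma update1_diff (x : Fin 8 → ℝ) :
    Differentiable ℝ (fun s : ℝ => Function.update x 1 s) := by
  have hrep : (fun s : ℝ => Function.update x 1 s)
      = fun s => x + (s - x 1) • (Pi.single 1 1 : Fin 8 → ℝ) := by
    funext s j
    rcases eq_or_ne j 1 with h | h
    · subst h; simp
    · simp [Function.update_of_ne h, Pi.single_eq_of_ne h]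
  rw [hrep]
  fun_prop

/-- at every point λ ∈ Σ₂ \ N*ℋ and for every smooth β with β(λ) ≠ 0, the
Hamiltonian vector fields H_{f⁺}(λ), H_{f⁻}(λ) of f^± = p_t + Ψ ± (r − r_s/2)·β together
with the cone-axis (radial) vector R(λ) = (0,0,0,0,p_t,p_r,p_θ,p_φ) are linearly
independent. -/
theorem hamiltonian_fields_and_cone_axis_independent
    (rs c : ℝ) (hrs : 0 < rs) (hc : 0 < c)
    (β : (Fin 8 → ℝ) → ℝ) (hβ : ContDiffOn ℝ (⊤ : ℕ∞) β chartU)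
    (x : Fin 8 → ℝ) (hx : x ∈ chartU)
    (hhor : x 1 = rs / 2) (hchar : x 4 + c / rs * x 7 = 0)
    (hp : ¬(x 6 = 0 ∧ x 7 = 0)) (hβx : β x ≠ 0) :
    LinearIndependent ℝ
      ![hamVF (fun y => y 4 + Psiv rs c y + (y 1 - rs / 2) * β y) x,
        hamVF (fun y => y 4 + Psiv rs c y - (y 1 - rs / 2) * β y) x,
        ![0, 0, 0, 0, x 4, x 5, x 6, x 7]] := by
  -- positivity facts
  have hS : 0 < Sig rs (x 1) (x 2) := by rw [hhor]; unfold Sig; positivity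
  have hD : 0 < Dfun rs (x 1) (x 2) := by
    unfold Dfun
    have h1 : 0 ≤ rs * x 1 / Sig rs (x 1) (x 2) * (rs ^ 2 / 4) * Real.sin (x 2) ^ 2 := by
      have hx1 : 0 < x 1 := hx.1
      positivity
    nlinarith [sq_nonneg rs, sq_nonneg (x 1)]
  -- f⁺ and f⁻ agree after updating any coordinate other than r
  have hsame : ∀ i : Fin 8, (1 : Fin 8) ≠ i →
      pd i (fun y => y 4 + Psiv rs c y + (y 1 - rs / 2) * β y) x
        = pd i (fun y => y 4 + Psiv rs c y - (y 1 - rs / 2) * β y) x := by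
    intro i hi
    unfold pd
    congr 1
    funext s
    have h1 : Function.update x i s 1 = x 1 := Function.update_of_ne hi _ _
    simp only [h1, hhor, sub_self, zero_mul, add_zero, sub_zero]
  -- pd 4 of both functions is 1
  have hpd4 : ∀ γ : (Fin 8 → ℝ) → ℝ,
      pd 4 (fun y => y 4 + Psiv rs c y + (y 1 - rs / 2) * γ y) x = 1 := by
    intro γ
    have h4 : (fun s => (fun y => y 4 + Psiv rs c y + (y 1 - rs / 2) * γ y)
        (Function.update x 4 s)) = fun s => s + Psiv rs c x := by
      funext s
      have e1 : Function.update x 4 s 1 = x 1 := by simp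
      have e2 : Function.update x 4 s 2 = x 2 := by simp
      have e7 : Function.update x 4 s 7 = x 7 := by simp
      have e4 : Function.update x 4 s 4 = s := by simp
      simp only [Psiv, e1, e2, e7, e4, hhor, sub_self, zero_mul, add_zero]
    unfold pd
    rw [h4]
    simp [deriv_add_const]
  have hpd4m : pd 4 (fun y => y 4 + Psiv rs c y - (y 1 - rs / 2) * β y) x = 1 := by
    have := hpd4 (fun y => -β y)
    have he : (fun y => y 4 + Psiv rs c y + (y 1 - rs / 2) * (fun y => -β y) y)
        = fun y => y 4 + Psiv rs c y - (y 1 - rs / 2) * β y := by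
      funext y; ring
    rwa [he] at this
  -- differentiability of the Ψ part in r
  have hΨfun : (fun s => Psiv rs c (Function.update x 1 s))
      = fun s => rs * c / 2 * (rs * s / Sig rs s (x 2)) / Dfun rs s (x 2) * x 7 := by
    funext s; simp [Psiv, Function.update_apply]
  have hSd : DifferentiableAt ℝ (fun s => Sig rs s (x 2)) (x 1) := by unfold Sig; fun_prop
  have hDd : DifferentiableAt ℝ (fun s => Dfun rs s (x 2)) (x 1) := by
    unfold Dfun
    apply DifferentiableAt.add
    · fun_prop
    · apply DifferentiableAt.mul _ (differentiableAt_const _)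
      apply DifferentiableAt.mul _ (differentiableAt_const _)
      exact ((differentiableAt_const _).mul differentiableAt_fun_id).div hSd hS.ne'
  have hΨdiff : DifferentiableAt ℝ (fun s => Psiv rs c (Function.update x 1 s)) (x 1) := by
    rw [hΨfun]
    exact ((((differentiableAt_const _).mul
      (((differentiableAt_const _).mul differentiableAt_fun_id).div hSd hS.ne')).div
        hDd hD.ne').mul (differentiableAt_const _))
  have hbase : DifferentiableAt ℝ
      (fun s => x 4 + Psiv rs c (Function.update x 1 s)) (x 1) :=
    (differentiableAt_const _).add hΨdiff
  -- differentiability of β ∘ update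
  have hβat : DifferentiableAt ℝ β x :=
    ((hβ.contDiffAt (isOpen_chartU.mem_nhds hx)).differentiableAt (by simp))
  have hβat' : DifferentiableAt ℝ β (Function.update x 1 (x 1)) := by
    rwa [Function.update_eq_self]
  have hβupd : DifferentiableAt ℝ (fun s => β (Function.update x 1 s)) (x 1) :=
    hβat'.comp (x 1) ((update1_diff x) (x 1))
  -- derivative of the boundary-defining factor
  have hmul : HasDerivAt (fun s => (s - rs / 2) * β (Function.update x 1 s)) (β x) (x 1) := by
    have h1 : HasDerivAt (fun s : ℝ => s - rs / 2) 1 (x 1) := (hasDerivAt_id _).sub_const _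
    have h2 := h1.mul hβupd.hasDerivAt
    have : (1 * β (Function.update x 1 (x 1))
        + (x 1 - rs / 2) * deriv (fun s => β (Function.update x 1 s)) (x 1)) = β x := by
      rw [Function.update_eq_self, hhor]; ring
    rwa [this] at h2
  set P := deriv (fun s => x 4 + Psiv rs c (Function.update x 1 s)) (x 1) with hP
  have hpd1p : pd 1 (fun y => y 4 + Psiv rs c y + (y 1 - rs / 2) * β y) x = P + β x := by
    unfold pd
    have hrw : (fun s => (fun y => y 4 + Psiv rs c y + (y 1 - rs / 2) * β y)
        (Function.update x 1 s))
        = fun s => (x 4 + Psiv rs c (Function.update x 1 s))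
            + (s - rs / 2) * β (Function.update x 1 s) := by
      funext s
      have e4 : Function.update x 1 s 4 = x 4 := by simp
      have e1 : Function.update x 1 s 1 = s := by simp
      simp only [e4, e1]
    rw [hrw, deriv_fun_add hbase hmul.differentiableAt, hmul.deriv]
  have hpd1m : pd 1 (fun y => y 4 + Psiv rs c y - (y 1 - rs / 2) * β y) x = P - β x := by
    unfold pd
    have hrw : (fun s => (fun y => y 4 + Psiv rs c y - (y 1 - rs / 2) * β y)
        (Function.update x 1 s))
        = fun s => (x 4 + Psiv rs c (Function.update x 1 s))
            - (s - rs / 2) * β (Function.update x 1 s) := by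
      funext s
      have e4 : Function.update x 1 s 4 = x 4 := by simp
      have e1 : Function.update x 1 s 1 = s := by simp
      simp only [e4, e1]
    rw [hrw, deriv_fun_sub hbase hmul.differentiableAt, hmul.deriv]
  -- linear independence
  rw [Fintype.linearIndependent_iff]
  intro g hg
  have hj : ∀ j : Fin 8,
      g 0 * hamVF (fun y => y 4 + Psiv rs c y + (y 1 - rs / 2) * β y) x j
      + g 1 * hamVF (fun y => y 4 + Psiv rs c y - (y 1 - rs / 2) * β y) x j
      + g 2 * (![0, 0, 0, 0, x 4, x 5, x 6, x 7] : Fin 8 → ℝ) j = 0 := by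
    intro j
    have := congrFun hg j
    simpa [Fin.sum_univ_three, add_assoc] using this
  have h0 := hj 0
  have h5 := hj 5
  have h6 := hj 6
  have h7 := hj 7
  rw [show ∀ f, hamVF f x 0 = pd 4 f x from fun _ => rfl,
      show ∀ f, hamVF f x 0 = pd 4 f x from fun _ => rfl] at h0
  rw [hpd4 β, hpd4m] at h0
  have E0 : g 0 + g 1 = 0 := by
    have : (![0, 0, 0, 0, x 4, x 5, x 6, x 7] : Fin 8 → ℝ) 0 = 0 := rfl
    rw [this] at h0
    linarith
  -- component 7
  have c7 : ∀ f, hamVF f x 7 = -pd 3 f x := fun _ => rfl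
  rw [c7, c7, hsame 3 (by decide),
      show (![0, 0, 0, 0, x 4, x 5, x 6, x 7] : Fin 8 → ℝ) 7 = x 7 from rfl] at h7
  have E7 : g 2 * x 7 = 0 := by
    linear_combination h7 + (pd 3 (fun y => y 4 + Psiv rs c y - (y 1 - rs / 2) * β y) x) * E0
  -- component 6
  have c6 : ∀ f, hamVF f x 6 = -pd 2 f x := fun _ => rfl
  rw [c6, c6, hsame 2 (by decide),
      show (![0, 0, 0, 0, x 4, x 5, x 6, x 7] : Fin 8 → ℝ) 6 = x 6 from rfl] at h6
  have E6 : g 2 * x 6 = 0 := by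
    linear_combination h6 + (pd 2 (fun y => y 4 + Psiv rs c y - (y 1 - rs / 2) * β y) x) * E0
  have hg2 : g 2 = 0 := by
    rcases not_and_or.mp hp with h | h
    · exact (mul_eq_zero.mp E6).resolve_right h
    · exact (mul_eq_zero.mp E7).resolve_right h
  -- component 5
  have c5 : ∀ f, hamVF f x 5 = -pd 1 f x := fun _ => rfl
  rw [c5, c5, hpd1p, hpd1m,
      show (![0, 0, 0, 0, x 4, x 5, x 6, x 7] : Fin 8 → ℝ) 5 = x 5 from rfl] at h5
  have E5 : (g 1 - g 0) * β x = 0 := by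
    linear_combination h5 + P * E0 - x 5 * hg2
  have hg01 : g 1 - g 0 = 0 := (mul_eq_zero.mp E5).resolve_right hβx
  intro i
  fin_cases i
  · simpa using by linarith
  · simpa using by linarith
  · simpa using hg2
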